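/- The formulas ◇φ ⇒ (φ ∨ ○◇φ) and (φ ∧ ○□φ) ⇒ □φ are derivable in the calculus GTL. -/

import Mathlib

/-- Formulas of the Gödel temporal language. -/
inductive GF where
  | var : Nat → GF
  | and : GF → GF → GF
  | or : GF → GF → GF
  | imp : GF → GF → GF
  | coimp : GF → GF → GF
  | next : GF → GF
  | dia : GF → GF
  | box : GF → GF
deriving DecidableEq

/-- ⊥ := p ⇐ p -/
def GF.bot : GF := .coimp (.var 0) (.var 0)
/-- ⊤ := p ⇒ p -/
def GF.top : GF := .imp (.var 0) (.var 0)
/-- ¬φ := φ ⇒ ⊥ -/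
def GF.neg (φ : GF) : GF := .imp φ .bot
/-- φ ⟺ ψ := (φ⇒ψ) ∧ (ψ⇒φ) -/
def GF.iffF (φ ψ : GF) : GF := .and (.imp φ ψ) (.imp ψ φ)

/-- The deductive calculus GTL. Intuitionistic tautologies are generated by a
standard Hilbert-style axiomatization of intuitionistic propositional logic. -/
inductive GTL : GF → Prop where
  -- intuitionistic axioms
  | i1 (φ ψ : GF) : GTL (.imp φ (.imp ψ φ))
  | i2 (φ ψ χ : GF) : GTL (.imp (.imp φ (.imp ψ χ)) (.imp (.imp φ ψ) (.imp φ χ)))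
  | i3 (φ ψ : GF) : GTL (.imp (.and φ ψ) φ)
  | i4 (φ ψ : GF) : GTL (.imp (.and φ ψ) ψ)
  | i5 (φ ψ : GF) : GTL (.imp φ (.imp ψ (.and φ ψ)))
  | i6 (φ ψ : GF) : GTL (.imp φ (.or φ ψ))
  | i7 (φ ψ : GF) : GTL (.imp ψ (.or φ ψ))
  | i8 (φ ψ χ : GF) : GTL (.imp (.imp φ χ) (.imp (.imp ψ χ) (.imp (.or φ ψ) χ)))
  | i9 (φ : GF) : GTL (.imp .bot φ)
  -- H-B axioms and rules
  | hb1 (φ ψ : GF) : GTL (.imp φ (.or ψ (.coimp φ ψ)))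
  | hbMon {φ ψ : GF} (θ : GF) : GTL (.imp φ ψ) → GTL (.imp (.coimp φ θ) (.coimp ψ θ))
  | hbDis {φ ψ γ : GF} : GTL (.imp φ (.or ψ γ)) → GTL (.imp (.coimp φ ψ) γ)
  -- linearity axioms
  | lin (φ ψ : GF) : GTL (.or (.imp φ ψ) (.imp ψ φ))
  | colin (φ ψ : GF) : GTL (GF.neg (.and (.coimp φ ψ) (.coimp ψ φ)))
  -- temporal axioms
  | nBot : GTL (GF.neg (.next .bot))
  | nOr (φ ψ : GF) : GTL (.imp (.next (.or φ ψ)) (.or (.next φ) (.next ψ)))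
  | nAnd (φ ψ : GF) : GTL (.imp (.and (.next φ) (.next ψ)) (.next (.and φ ψ)))
  | nImp (φ ψ : GF) : GTL (GF.iffF (.next (.imp φ ψ)) (.imp (.next φ) (.next ψ)))
  | kBox (φ ψ : GF) : GTL (.imp (.box (.imp φ ψ)) (.imp (.box φ) (.box ψ)))
  | kDia (φ ψ : GF) : GTL (.imp (.box (.imp φ ψ)) (.imp (.dia φ) (.dia ψ)))
  | boxFix (φ : GF) : GTL (.imp (.box φ) (.and φ (.next (.box φ))))
  | diaFix (φ : GF) : GTL (.imp (.or φ (.next (.dia φ))) (.dia φ))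
  | indBox (φ : GF) : GTL (.imp (.box (.imp φ (.next φ))) (.imp φ (.box φ)))
  | indDia (φ : GF) : GTL (.imp (.box (.imp (.next φ) φ)) (.imp (.dia φ) φ))
  -- back–up confluence axiom
  | backup (φ ψ : GF) : GTL (.imp (.next (.coimp φ ψ)) (.coimp (.next φ) (.next ψ)))
  -- standard modal rules
  | mp {φ ψ : GF} : GTL φ → GTL (.imp φ ψ) → GTL ψ
  | necN {φ : GF} : GTL φ → GTL (.next φ)
  | necBox {φ : GF} : GTL φ → GTL (.box φ)

/-- Finite conjunction (⋀∅ = ⊤). -/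
def GF.conj : List GF → GF := fun l => l.foldr .and .top
/-- Finite disjunction (⋁∅ = ⊥). -/
def GF.disj : List GF → GF := fun l => l.foldr .or .bot


/-! The converse halves of the fixpoint axioms `diaFix` and `boxFix` follow by Lambek's argument:
`φ ∨ ○◇φ` is closed under `○`-predecessors, so by `indDia` it follows from `◇(φ ∨ ○◇φ)`, hence from `◇φ`; dually
`φ ∧ ○□φ` implies its own `○`, so by `indBox` it implies `□(φ ∧ ○□φ)`, hence `□φ`. -/

namespace GTL

theorem imp_trans {a b c : GF} (hab : GTL (.imp a b)) (hbc : GTL (.imp b c)) :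
    GTL (.imp a c) :=
  mp hab (mp (mp hbc (i1 (.imp b c) a)) (i2 a b c))

theorem or_elim {a b c : GF} (hac : GTL (.imp a c)) (hbc : GTL (.imp b c)) :
    GTL (.imp (.or a b) c) :=
  mp hbc (mp hac (i8 a b c))

theorem next_mono {a b : GF} (h : GTL (.imp a b)) : GTL (.imp (.next a) (.next b)) :=
  mp (necN h) (mp (nImp a b) (i3 _ _))

theorem box_mono {a b : GF} (h : GTL (.imp a b)) : GTL (.imp (.box a) (.box b)) :=
  mp (necBox h) (kBox a b)

theorem dia_mono {a b : GF} (h : GTL (.imp a b)) : GTL (.imp (.dia a) (.dia b)) :=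
  mp (necBox h) (kDia a b)

theorem imp_dia (φ : GF) : GTL (.imp φ (.dia φ)) :=
  imp_trans (i6 φ (.next (.dia φ))) (diaFix φ)

theorem next_dia_imp_dia (φ : GF) : GTL (.imp (.next (.dia φ)) (.dia φ)) :=
  imp_trans (i7 φ (.next (.dia φ))) (diaFix φ)

theorem dia_unfold (φ : GF) : GTL (.imp (.dia φ) (.or φ (.next (.dia φ)))) := by
  set ψ : GF := .or φ (.next (.dia φ))
  have next_closed : GTL (.imp (.next ψ) ψ) :=
    imp_trans (nOr φ (.next (.dia φ)))
      (or_elim (imp_trans (next_mono (imp_dia φ)) (i7 _ _))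
        (imp_trans (next_mono (next_dia_imp_dia φ)) (i7 _ _)))
  exact imp_trans (dia_mono (i6 φ (.next (.dia φ)))) (mp (necBox next_closed) (indDia ψ))

theorem box_fold (φ : GF) : GTL (.imp (.and φ (.next (.box φ))) (.box φ)) := by
  set χ : GF := .and φ (.next (.box φ))
  have next_invariant : GTL (.imp χ (.next χ)) :=
    imp_trans (i4 φ (.next (.box φ))) (next_mono (boxFix φ))
  exact imp_trans (mp (necBox next_invariant) (indBox χ)) (box_mono (i3 φ (.next (.box φ))))

end GTL

/-- ◇φ ⇒ (φ ∨ ○◇φ) and (φ ∧ ○□φ) ⇒ □φ are derivable in GTL. -/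
theorem stmt10 (φ : GF) :
    GTL (.imp (.dia φ) (.or φ (.next (.dia φ)))) ∧
    GTL (.imp (.and φ (.next (.box φ))) (.box φ)) :=
  ⟨GTL.dia_unfold φ, GTL.box_fold φ⟩
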